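/- Let k ≥ 7 be odd and let T be any C_4-free graph on (k-3)/2 vertices. Then the graph G = T ∨ (I_{n-(k-1)/2} ∪ K_2) contains no copy of K_{2,2,2} and no path on k vertices, where K_2 is a single edge uv disjoint from the independent set. -/

import Mathlib

open SimpleGraph

/-- `H` has a copy in `G`, i.e. `G` contains `H` as a (not necessarily induced) subgraph. -/
def CopyIn {α β : Type*} (H : SimpleGraph α) (G : SimpleGraph β) : Prop :=
  ∃ f : α ↪ β, ∀ a b, H.Adj a b → G.Adj (f a) (f b)

/-- The join `G ∨ H` of two graphs: disjoint union plus all edges in between. -/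
def graphJoin {α β : Type*} (G : SimpleGraph α) (H : SimpleGraph β) : SimpleGraph (α ⊕ β) where
  Adj x y := (∃ a b, x = Sum.inl a ∧ y = Sum.inl b ∧ G.Adj a b) ∨
    (∃ a b, x = Sum.inr a ∧ y = Sum.inr b ∧ H.Adj a b) ∨
    (x.isLeft ∧ y.isRight) ∨ (x.isRight ∧ y.isLeft)
  symm := by
    constructor
    rintro x y (⟨a, b, rfl, rfl, h⟩ | ⟨a, b, rfl, rfl, h⟩ | ⟨h1, h2⟩ | ⟨h1, h2⟩)
    · exact Or.inl ⟨b, a, rfl, rfl, h.symm⟩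
    · exact Or.inr (Or.inl ⟨b, a, rfl, rfl, h.symm⟩)
    · exact Or.inr (Or.inr (Or.inr ⟨h2, h1⟩))
    · exact Or.inr (Or.inr (Or.inl ⟨h2, h1⟩))
  loopless := by
    constructor
    rintro x (⟨a, b, rfl, heq, h⟩ | ⟨a, b, rfl, heq, h⟩ | ⟨h1, h2⟩ | ⟨h1, h2⟩)
    · cases heq; exact G.loopless.irrefl _ h
    · cases heq; exact H.loopless.irrefl _ h
    · cases x <;> simp_all
    · cases x <;> simp_all

/-- A matching with `t` edges. -/
def matchingGraph (t : ℕ) : SimpleGraph (Fin t × Fin 2) :=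
  SimpleGraph.fromRel (fun p q => p.1 = q.1)

/-- The star with `t` edges. -/
def starGraph (t : ℕ) : SimpleGraph (Fin 1 ⊕ Fin t) := completeBipartiteGraph (Fin 1) (Fin t)

/-- Turán number of a single forbidden graph. -/
noncomputable def exNum1 {α : Type*} (n : ℕ) (A : SimpleGraph α) : ℕ :=
  sSup {e | ∃ G : SimpleGraph (Fin n), ¬ CopyIn A G ∧ e = G.edgeSet.ncard}

/-- Turán number of two forbidden graphs. -/
noncomputable def exNum2 {α β : Type*} (n : ℕ) (A : SimpleGraph α) (B : SimpleGraph β) : ℕ :=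
  sSup {e | ∃ G : SimpleGraph (Fin n),
    ¬ CopyIn A G ∧ ¬ CopyIn B G ∧ e = G.edgeSet.ncard}

/-- Connected Turán number of two forbidden graphs. -/
noncomputable def exConn2 {α β : Type*} (n : ℕ) (A : SimpleGraph α) (B : SimpleGraph β) : ℕ :=
  sSup {e | ∃ G : SimpleGraph (Fin n),
    G.Connected ∧ ¬ CopyIn A G ∧ ¬ CopyIn B G ∧ e = G.edgeSet.ncard}

/-- Turán number of a family of forbidden graphs. -/
noncomputable def exNumFam (n : ℕ) (F : Set (Σ V : Type, SimpleGraph V)) : ℕ :=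
  sSup {e | ∃ G : SimpleGraph (Fin n),
    (∀ M ∈ F, ¬ CopyIn M.2 G) ∧ e = G.edgeSet.ncard}

/-- The family of graphs obtained from `H` by deleting one color class of a proper coloring
of `H` with `χ(H)` colors. -/
def delClassFam {W : Type} (H : SimpleGraph W) : Set (Σ V : Type, SimpleGraph V) :=
  {M | ∃ (m : ℕ) (C : H.Coloring (Fin m)) (c : Fin m),
    H.chromaticNumber = (m : ℕ∞) ∧
    M = ⟨{v : W | C v ≠ c}, H.induce {v : W | C v ≠ c}⟩}

/-- The family of graphs obtained from `H` by deleting two adjacent vertices. -/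
def delPairFam {W : Type} (H : SimpleGraph W) : Set (Σ V : Type, SimpleGraph V) :=
  {M | ∃ u v : W, H.Adj u v ∧
    M = ⟨{x : W | x ≠ u ∧ x ≠ v}, H.induce {x : W | x ≠ u ∧ x ≠ v}⟩}

/-!
Write the graph as `T ∨ H` with `H = I ∪ K₂`, in which every vertex has at most one neighbour;
so a vertex of a copy of `K_{2,2,2}` or `P_k` that lands in `H` along with one of its
neighbours is an end of the `K₂`. In `K_{2,2,2}` every vertex is adjacent to all but one
other vertex, so at most two vertices land in `H`, and the at least four landing in `T` contain a
4-cycle of `K_{2,2,2}`. Along a path, the vertices landing in `H` form runs separated by vertices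
of `T`; each run has at most two vertices and at most one has two, so the path has at most
`2|T| + 2 < k` vertices.
-/

open Finset Sum

section GraphJoin

variable {τ α β : Type*}

@[simp]
lemma graphJoin_adj_inl_inl {G : SimpleGraph τ} {H : SimpleGraph β} {a b : τ} :
    (graphJoin G H).Adj (inl a) (inl b) ↔ G.Adj a b := by
  simp [graphJoin]

@[simp]
lemma graphJoin_adj_inr_inr {G : SimpleGraph τ} {H : SimpleGraph β} {a b : β} :
    (graphJoin G H).Adj (inr a) (inr b) ↔ H.Adj a b := by
  simp [graphJoin]

lemma copyIn_of_forall_isLeft {F : SimpleGraph β} {T : SimpleGraph τ} {H : SimpleGraph α}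
    (f : β ↪ τ ⊕ α) (hf : ∀ a b, F.Adj a b → (graphJoin T H).Adj (f a) (f b))
    (hl : ∀ a, (f a).isLeft) : CopyIn F T := by
  choose g hg using fun a => isLeft_iff.1 (hl a)
  refine ⟨⟨g, fun a b h => f.injective (by rw [hg, hg, h])⟩, fun a b h => ?_⟩
  change T.Adj (g a) (g b)
  simpa only [hg, graphJoin_adj_inl_inl] using hf a b h

lemma exists_eq_inr_inr_of_adj {T : SimpleGraph τ} {u v : τ ⊕ (α ⊕ Fin 2)}
    (h : (graphJoin T ((⊥ : SimpleGraph α) ⊕g completeGraph (Fin 2))).Adj u v)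
    (hu : ¬ u.isLeft) (hv : ¬ v.isLeft) : ∃ x, u = inr (inr x) := by
  rcases u with _ | _ | x <;> rcases v with _ | _ | y <;> simp_all

end GraphJoin

lemma Finset.card_le_card_of_forall_exists_apply_eq {α β γ : Type*} [Fintype γ] (f : α ↪ β)
    (g : γ → β) {s : Finset α} (h : ∀ a ∈ s, ∃ c, f a = g c) : #s ≤ Fintype.card γ :=
  card_le_card_of_forall_subsingleton (fun a c => f a = g c) (t := univ)
    (fun a ha => (h a ha).imp fun _ hc => ⟨mem_univ _, hc⟩)
    fun _ _ _ ha _ hb => f.injective (ha.2.trans hb.2.symm)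

section CompleteMultipartite

variable {ι : Type*}

lemma completeMultipartiteGraph_fin_two_adj_or_adj {p q r : Σ _ : ι, Fin 2}
    (hpq : p ≠ q) (hpr : p ≠ r) (hqr : q ≠ r) :
    (completeMultipartiteGraph fun _ : ι => Fin 2).Adj p q ∨
      (completeMultipartiteGraph fun _ : ι => Fin 2).Adj p r := by
  obtain ⟨i, x⟩ := p
  obtain ⟨j, y⟩ := q
  obtain ⟨l, z⟩ := r
  simp only [completeMultipartiteGraph, comap_adj, top_adj]
  by_contra! ⟨rfl, rfl⟩
  simp only [ne_eq, Sigma.mk.injEq, heq_eq_eq, true_and] at hpq hpr hqr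
  omega

lemma exists_cycleGraph_four_embedding [Fintype ι] (s : Finset (Σ _ : ι, Fin 2))
    (hι : Fintype.card ι < #s) (hs : 4 ≤ #s) :
    ∃ g : Fin 4 ↪ (Σ _ : ι, Fin 2), (∀ m, g m ∈ s) ∧ ∀ m n, (cycleGraph 4).Adj m n →
      (completeMultipartiteGraph fun _ : ι => Fin 2).Adj (g m) (g n) := by
  classical
  obtain ⟨i, -, hi⟩ := exists_lt_card_fiber_of_mul_lt_card_of_maps_to (t := univ) (n := 1)
    (f := Sigma.fst) (fun _ _ => mem_univ _) (by simpa using hι)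
  obtain ⟨a, ha, c, hc, hac⟩ := one_lt_card.1 hi
  have hpart : #{p ∈ s | p.1 = i} ≤ 2 := by
    refine card_le_card_of_forall_exists_apply_eq (.refl _) (Sigma.mk i) fun p hp => ⟨p.2, ?_⟩
    obtain ⟨_, rfl⟩ := mem_filter.1 hp
    rfl
  have hrest := card_filter_add_card_filter_not (s := s) (fun p => p.1 = i)
  obtain ⟨x, hx, y, hy, hxy⟩ := one_lt_card.1 (by omega : 1 < #{p ∈ s | ¬ p.1 = i})
  simp only [mem_filter] at ha hc hx hy
  have hinj : Function.Injective ![a, x, c, y] := by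
    intro m n h
    fin_cases m <;> fin_cases n <;> simp_all
  refine ⟨⟨_, hinj⟩, fun m => ?_, fun m n h => ?_⟩
  · fin_cases m <;> simp_all
  · fin_cases m <;> fin_cases n <;> simp_all +decide [eq_comm]

end CompleteMultipartite

lemma Fin.card_filter_le_card_filter_not_add {k : ℕ} (P : Fin k → Prop) [DecidablePred P] :
    #{i | P i} ≤
      #{i | ¬ P i} + #{i : Fin k | ∃ j : Fin k, i.val + 1 = j.val ∧ P i ∧ P j} + 1 := by
  set runEnds : Finset (Fin k) := {i | ∃ j : Fin k, i.val + 1 = j.val ∧ P i ∧ ¬ P j}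
  set runSteps : Finset (Fin k) := {i | ∃ j : Fin k, i.val + 1 = j.val ∧ P i ∧ P j}
  set last : Finset (Fin k) := {i | i.val + 1 = k}
  have hcover : ({i | P i} : Finset (Fin k)) ⊆ runEnds ∪ runSteps ∪ last := by
    intro i hi
    simp only [runEnds, runSteps, last, mem_filter, mem_univ, true_and, mem_union] at hi ⊢
    by_cases hk : i.val + 1 < k
    · by_cases hj : P ⟨i + 1, hk⟩
      · exact .inl (.inr ⟨_, rfl, hi, hj⟩)
      · exact .inl (.inl ⟨_, rfl, hi, hj⟩)
    · exact .inr (by omega)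
  have hrunEnds : #runEnds ≤ #{i | ¬ P i} :=
    card_le_card_of_forall_subsingleton (fun i j => i.val + 1 = j.val)
      (fun i hi => by
        obtain ⟨j, hj, -, hPj⟩ := (mem_filter.1 hi).2
        exact ⟨j, mem_filter.2 ⟨mem_univ _, hPj⟩, hj⟩)
      fun j _ i₁ hi₁ i₂ hi₂ => Fin.ext (by have := hi₁.2; have := hi₂.2; omega)
  have hlast : #last ≤ 1 :=
    card_le_one.2 fun i hi j hj => Fin.ext <| by
      have := (mem_filter.1 hi).2
      have := (mem_filter.1 hj).2
      omega
  grw [card_le_card hcover, card_union_le, card_union_le, hrunEnds, hlast]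

section Join

variable {τ α : Type*}

theorem not_copyIn_completeMultipartiteGraph_graphJoin {T : SimpleGraph τ}
    (hT : ¬ CopyIn (cycleGraph 4) T) :
    ¬ CopyIn (completeMultipartiteGraph fun _ : Fin 3 => Fin 2)
      (graphJoin T ((⊥ : SimpleGraph α) ⊕g completeGraph (Fin 2))) := by
  classical
  rintro ⟨f, hf⟩
  set right : Finset (Σ _ : Fin 3, Fin 2) := {p | ¬ (f p).isLeft}
  have hright : #right ≤ 2 := by
    by_contra! h
    refine h.not_ge (card_le_card_of_forall_exists_apply_eq f (inr ∘ inr) fun p hp => ?_)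
    obtain ⟨q, hq, r, hr, hqr⟩ :=
      one_lt_card.1 (by rw [card_erase_of_mem hp]; omega : 1 < #(right.erase p))
    obtain ⟨hqp, hq⟩ := mem_erase.1 hq
    obtain ⟨hrp, hr⟩ := mem_erase.1 hr
    have hp := (mem_filter.1 hp).2
    exact (completeMultipartiteGraph_fin_two_adj_or_adj hqp.symm hrp.symm hqr).elim
      (fun h => exists_eq_inr_inr_of_adj (hf _ _ h) hp (mem_filter.1 hq).2)
      (fun h => exists_eq_inr_inr_of_adj (hf _ _ h) hp (mem_filter.1 hr).2)
  have hleft : 4 ≤ #{p | (f p).isLeft} := by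
    have : #{p | (f p).isLeft} + #right = 6 := card_filter_add_card_filter_not _
    omega
  obtain ⟨g, hgl, hg⟩ :=
    exists_cycleGraph_four_embedding _ (by simp only [Fintype.card_fin]; omega) hleft
  exact hT (copyIn_of_forall_isLeft (g.trans f) (fun m n h => hf _ _ (hg m n h))
    fun m => (mem_filter.1 (hgl m)).2)

theorem not_copyIn_pathGraph_graphJoin [Fintype τ] (T : SimpleGraph τ) {k : ℕ}
    (hk : 2 * Fintype.card τ + 3 ≤ k) :
    ¬ CopyIn (pathGraph k) (graphJoin T ((⊥ : SimpleGraph α) ⊕g completeGraph (Fin 2))) := by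
  classical
  rintro ⟨f, hf⟩
  have hleft : #{i | (f i).isLeft} ≤ Fintype.card τ :=
    card_le_card_of_forall_exists_apply_eq f inl fun i hi =>
      isLeft_iff.1 (mem_filter.1 hi).2
  set rightSteps : Finset (Fin k) :=
    {i | ∃ j : Fin k, i.val + 1 = j.val ∧ ¬ (f i).isLeft ∧ ¬ (f j).isLeft}
  have hrightSteps : #rightSteps ≤ 1 := by
    -- two such steps at `i₁ < i₂` would put `i₁`, `i₂`, `i₂ + 1` on the two ends of the `K₂`
    have hlt : ∀ i₁ ∈ rightSteps, ∀ i₂ ∈ rightSteps, ¬ i₁ < i₂ := by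
      intro i₁ h₁ i₂ h₂ hlt
      obtain ⟨j₁, hj₁, hl₁, hl₁'⟩ := (mem_filter.1 h₁).2
      obtain ⟨j₂, hj₂, hl₂, hl₂'⟩ := (mem_filter.1 h₂).2
      have hadj₁ := hf _ _ (pathGraph_adj.2 (.inl hj₁))
      have hadj₂ := hf _ _ (pathGraph_adj.2 (.inl hj₂))
      have hthree : #{i₁, i₂, j₂} = 3 :=
        card_eq_three.2 ⟨_, _, _, hlt.ne, by grind, by grind, rfl⟩
      have hK2 : #{i₁, i₂, j₂} ≤ Fintype.card (Fin 2) :=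
        card_le_card_of_forall_exists_apply_eq f (inr ∘ inr) fun i hi => by
          simp only [mem_insert, mem_singleton] at hi
          rcases hi with rfl | rfl | rfl
          · exact exists_eq_inr_inr_of_adj hadj₁ hl₁ hl₁'
          · exact exists_eq_inr_inr_of_adj hadj₂ hl₂ hl₂'
          · exact exists_eq_inr_inr_of_adj hadj₂.symm hl₂' hl₂
      simp only [hthree, Fintype.card_fin] at hK2
      omega
    exact card_le_one.2 fun i₁ h₁ i₂ h₂ => by
      rcases lt_trichotomy i₁ i₂ with h | h | h
      exacts [(hlt _ h₁ _ h₂ h).elim, h, (hlt _ h₂ _ h₁ h).elim]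
  have hsplit : #{i | (f i).isLeft} + #{i | ¬ (f i).isLeft} = k := by
    simpa using card_filter_add_card_filter_not (s := univ) fun i => (f i).isLeft
  have hcount : #{i | ¬ (f i).isLeft} ≤ #{i | (f i).isLeft} + #rightSteps + 1 := by
    simpa only [not_not] using Fin.card_filter_le_card_filter_not_add fun i => ¬ (f i).isLeft
  omega

end Join

theorem C4_free_join_K222_Pk_free_general (k n : ℕ) (hk : 7 ≤ k)
    (T : SimpleGraph (Fin ((k - 3) / 2))) (hT : ¬ CopyIn (cycleGraph 4) T) :
    ¬ CopyIn (completeMultipartiteGraph (fun _ : Fin 3 => Fin 2))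
      (graphJoin T
        ((⊥ : SimpleGraph (Fin (n - (k - 1) / 2))) ⊕g completeGraph (Fin 2))) ∧
    ¬ CopyIn (pathGraph k)
      (graphJoin T
        ((⊥ : SimpleGraph (Fin (n - (k - 1) / 2))) ⊕g completeGraph (Fin 2))) :=
  ⟨not_copyIn_completeMultipartiteGraph_graphJoin hT,
    not_copyIn_pathGraph_graphJoin T (by simp only [Fintype.card_fin]; omega)⟩

theorem C4_free_join_K222_Pk_free (k n : ℕ) (hk : 7 ≤ k) (hodd : Odd k)
    (T : SimpleGraph (Fin ((k - 3) / 2))) (hT : ¬ CopyIn (cycleGraph 4) T) :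
    ¬ CopyIn (completeMultipartiteGraph (fun _ : Fin 3 => Fin 2))
      (graphJoin T
        ((⊥ : SimpleGraph (Fin (n - (k - 1) / 2))) ⊕g completeGraph (Fin 2))) ∧
    ¬ CopyIn (pathGraph k)
      (graphJoin T
        ((⊥ : SimpleGraph (Fin (n - (k - 1) / 2))) ⊕g completeGraph (Fin 2))) :=
  C4_free_join_K222_Pk_free_general k n hk T hT
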